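/- arXiv:1706.06732 — 2 statements merged into one kernel-verified Lean document; each statement's English description precedes it below -/
import Mathlib

section
/- Let L : ℝ → (−∞,+∞] be a proper, convex, lower semicontinuous function, let L*(z) = sup_{t∈ℝ} (t·z − L(t)) be its Legendre–Fenchel transform, and let {z_k : k ≥ 1} be a countable dense subset of the effective domain dom L* = {z : L*(z) < +∞}. Then for every t ∈ ℝ, lim_{n→∞} (1/n)·log ( Σ_{k=1}^n exp( n·(t·z_k − L*(z_k)) ) ) = L(t) (as a limit in [-∞,+∞]). -/
open Filter MeasureTheory Set Topology

noncomputable section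

/-- `c · log m` as an extended real number, where `m ∈ [0,∞]`. -/
def elog (c : ℝ) (m : ENNReal) : EReal := (c : EReal) * ENNReal.log m

/-- The generalized log-moment generating function `L̄` associated with the net
`(μ_α, c_α)` indexed by the filter `lf`:
`L̄(t) = limsup_α c_α · log ∫ exp(t·x/c_α) dμ_α(x)`. -/
def genLogMGF {ι : Type*} (lf : Filter ι) (μ : ι → Measure ℝ) (c : ι → ℝ) (t : ℝ) : EReal :=
  Filter.limsup
    (fun i => elog (c i) (∫⁻ x : ℝ, ENNReal.ofReal (Real.exp (t * x / c i)) ∂ (μ i))) lf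

/-- Legendre–Fenchel transform of an `EReal`-valued function on `ℝ`, evaluated at an
extended real argument: `L*(x) = sup_t (t·x − L(t))`. -/
def LegendreEE (L : ℝ → EReal) (x : EReal) : EReal := ⨆ t : ℝ, ((t : EReal) * x - L t)

open Classical in
/-- The right derivative of a convex `EReal`-valued function at `t`, with the conventions
`L'_r(t) = +∞` when `L(s) = +∞` for all `s > t` and `L'_r(t) = -∞` when `L(s) = -∞` for
some `s > t`; otherwise it is the infimum of the right difference quotients. -/
def rightDerivE (L : ℝ → EReal) (t : ℝ) : EReal :=
  if ∀ s : ℝ, t < s → L s = ⊤ then ⊤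
  else if ∃ s : ℝ, t < s ∧ L s = ⊥ then ⊥
  else ⨅ s ∈ Set.Ioi t, (L s - L t) * (((s - t)⁻¹ : ℝ) : EReal)

/-- The left derivative of a convex `EReal`-valued function at `t` (supremum of left
difference quotients). -/
def leftDerivE (L : ℝ → EReal) (t : ℝ) : EReal :=
  ⨆ s ∈ Set.Iio t, (L t - L s) * (((t - s)⁻¹ : ℝ) : EReal)

/-- Right limit at `a` of an `EReal`-valued function (as a `limsup`; it coincides with
`lim_{t→a⁺} f(t)` whenever the latter exists, e.g. for monotone or convex `f`). -/
def rightLimE (f : ℝ → EReal) (a : ℝ) : EReal := Filter.limsup f (nhdsWithin a (Set.Ioi a))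

/-- Left limit at `a` of an `EReal`-valued function (as a `limsup`; it coincides with
`lim_{t→a⁻} f(t)` whenever the latter exists). -/
def leftLimE (f : ℝ → EReal) (a : ℝ) : EReal := Filter.limsup f (nhdsWithin a (Set.Iio a))

/-- `L` is affine on the interval `(a, b]`. -/
def AffineOnIoc (L : ℝ → EReal) (a b : ℝ) : Prop :=
  ∃ p q : ℝ, ∀ s ∈ Set.Ioc a b, L s = ((p * s + q : ℝ) : EReal)

/-- `λ̃ = sup {t > λ : L is affine on (λ, t]}` (equal to `λ` if there is no such `t`). -/
def tildeOf (L : ℝ → EReal) (lam : ℝ) : ℝ :=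
  sSup (insert lam {t : ℝ | lam < t ∧ AffineOnIoc L lam t})

/-- Differentiability at `t` of an `EReal`-valued function: `L(t)` is finite and the
difference quotients converge to a (finite) real number. -/
def EDifferentiableAt (L : ℝ → EReal) (t : ℝ) : Prop :=
  (∃ r : ℝ, L t = (r : EReal)) ∧
  ∃ d : ℝ, Filter.Tendsto (fun s => (L s - L t) * (((s - t)⁻¹ : ℝ) : EReal))
    (nhdsWithin t {t}ᶜ) (nhds (d : EReal))

/-- The function `l₀(x) = − lim_{ε→0⁺} limsup_α c_α · log μ_α((x−ε, x+ε))` (the limit over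
`ε` exists by monotonicity and equals the infimum). -/
def l0fun {ι : Type*} (lf : Filter ι) (μ : ι → Measure ℝ) (c : ι → ℝ) (x : ℝ) : EReal :=
  - ⨅ ε ∈ Set.Ioi (0:ℝ),
      Filter.limsup (fun i => elog (c i) (μ i (Set.Ioo (x - ε) (x + ε)))) lf

/-- `L` restricted to `[0,∞)` is proper: `(−∞,+∞]`-valued with at least one finite value. -/
def LbarProper (L : ℝ → EReal) : Prop :=
  (∀ t : ℝ, 0 ≤ t → L t ≠ ⊥) ∧ ∃ t : ℝ, 0 ≤ t ∧ L t ≠ ⊤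

/-- `μ([x, y])` for extended-real endpoints `x, y`, with `μ` regarded as a measure on
`[-∞, +∞]`. -/
def muIccE (μ : Measure ℝ) (x y : EReal) : ENNReal :=
  μ {z : ℝ | x ≤ (z : EReal) ∧ (z : EReal) ≤ y}

/-- `μ((x, y))` for extended-real endpoints `x, y`. -/
def muIooE (μ : Measure ℝ) (x y : EReal) : ENNReal :=
  μ {z : ℝ | x < (z : EReal) ∧ (z : EReal) < y}

open Classical in
/-- The Legendre transform extended to `[-∞,+∞]` by continuity, with the paper's
convention `L̄*(−∞) = −L̄(0⁺)`. -/
def LegendreExt (L : ℝ → EReal) (x : EReal) : EReal :=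
  if x = ⊥ then -(rightLimE L 0) else if x = ⊤ then ⊤ else LegendreEE L x

end

namespace S18

lemma sum_lower (g : ℕ → ℝ) (n k0 : ℕ) (h : k0 < n) :
    g k0 ≤ (n:ℝ)⁻¹ * Real.log (∑ k ∈ Finset.range n, Real.exp ((n:ℝ) * g k)) := by
  have hn : (0:ℝ) < n := by
    have : 0 < n := Nat.pos_of_ne_zero (by omega)
    exact_mod_cast this
  have hle : Real.exp ((n:ℝ) * g k0) ≤ ∑ k ∈ Finset.range n, Real.exp ((n:ℝ) * g k) :=
    Finset.single_le_sum (f := fun k => Real.exp ((n:ℝ) * g k)) (fun k _ => (Real.exp_pos _).le) (Finset.mem_range.2 h)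
  have hlog : (n:ℝ) * g k0 ≤ Real.log (∑ k ∈ Finset.range n, Real.exp ((n:ℝ) * g k)) := by
    have := Real.log_le_log (Real.exp_pos _) hle
    rwa [Real.log_exp] at this
  calc g k0 = (n:ℝ)⁻¹ * ((n:ℝ) * g k0) := by field_simp
    _ ≤ _ := by apply mul_le_mul_of_nonneg_left hlog (by positivity)

lemma sum_upper (g : ℕ → ℝ) (m : ℝ) (hm : ∀ k, g k ≤ m) (n : ℕ) (h : 0 < n) :
    (n:ℝ)⁻¹ * Real.log (∑ k ∈ Finset.range n, Real.exp ((n:ℝ) * g k))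
      ≤ (n:ℝ)⁻¹ * Real.log n + m := by
  have hn : (0:ℝ) < n := by exact_mod_cast h
  have hsum : ∑ k ∈ Finset.range n, Real.exp ((n:ℝ) * g k) ≤ (n:ℝ) * Real.exp ((n:ℝ) * m) := by
    calc ∑ k ∈ Finset.range n, Real.exp ((n:ℝ) * g k)
        ≤ ∑ _k ∈ Finset.range n, Real.exp ((n:ℝ) * m) := by
          apply Finset.sum_le_sum
          intro k _
          exact Real.exp_le_exp.2 (mul_le_mul_of_nonneg_left (hm k) hn.le)
      _ = (n:ℝ) * Real.exp ((n:ℝ) * m) := by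
          rw [Finset.sum_const, Finset.card_range, nsmul_eq_mul]
  have hpos : (0:ℝ) < ∑ k ∈ Finset.range n, Real.exp ((n:ℝ) * g k) := by
    apply Finset.sum_pos (fun k _ => Real.exp_pos _) ⟨0, Finset.mem_range.2 h⟩
  have hlog : Real.log (∑ k ∈ Finset.range n, Real.exp ((n:ℝ) * g k))
      ≤ Real.log n + (n:ℝ) * m := by
    calc Real.log (∑ k ∈ Finset.range n, Real.exp ((n:ℝ) * g k))
        ≤ Real.log ((n:ℝ) * Real.exp ((n:ℝ) * m)) := Real.log_le_log hpos hsum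
      _ = Real.log n + (n:ℝ) * m := by
          rw [Real.log_mul hn.ne' (Real.exp_pos _).ne', Real.log_exp]
  calc (n:ℝ)⁻¹ * Real.log (∑ k ∈ Finset.range n, Real.exp ((n:ℝ) * g k))
      ≤ (n:ℝ)⁻¹ * (Real.log n + (n:ℝ) * m) :=
        mul_le_mul_of_nonneg_left hlog (by positivity)
    _ = (n:ℝ)⁻¹ * Real.log n + m := by field_simp

lemma log_div_tendsto : Tendsto (fun n : ℕ => ((n:ℝ))⁻¹ * Real.log n) atTop (nhds 0) := by
  have h := Real.tendsto_pow_log_div_mul_add_atTop 1 0 1 one_ne_zero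
  simp only [pow_one, one_mul, add_zero] at h
  have h2 := h.comp tendsto_natCast_atTop_atTop (α := ℕ)
  apply h2.congr
  intro n
  simp only [Function.comp, div_eq_inv_mul]

lemma tendsto_logsum (g : ℕ → ℝ) (M : EReal) (hM : (⨆ k, ((g k : EReal))) = M) :
    Tendsto (fun n : ℕ =>
      (((n:ℝ)⁻¹ * Real.log (∑ k ∈ Finset.range n, Real.exp ((n:ℝ) * g k)) : ℝ) : EReal))
      atTop (nhds M) := by
  have hMbot : M ≠ ⊥ := by
    rw [← hM]
    intro h
    have : ((g 0 : ℝ) : EReal) ≤ ⊥ := h ▸ le_iSup (fun k => ((g k : ℝ) : EReal)) 0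
    simp at this
  rcases eq_or_ne M ⊤ with hT | hT
  · subst hT
    rw [EReal.tendsto_nhds_top_iff_real]
    intro x
    have : ∃ k0, x < g k0 := by
      by_contra h
      push_neg at h
      have : (⨆ k, ((g k : EReal))) ≤ ((x:ℝ) : EReal) :=
        iSup_le fun k => EReal.coe_le_coe_iff.2 (h k)
      rw [hM] at this
      simp at this
    obtain ⟨k0, hk0⟩ := this
    filter_upwards [eventually_gt_atTop k0] with n hn
    exact_mod_cast lt_of_lt_of_le hk0 (sum_lower g n k0 hn)
  · lift M to ℝ using ⟨hT, hMbot⟩ with m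
    rw [EReal.tendsto_coe]
    have hgm : ∀ k, g k ≤ m := by
      intro k
      have : ((g k : ℝ) : EReal) ≤ (m : EReal) := hM ▸ le_iSup (fun k => ((g k : ℝ) : EReal)) k
      exact_mod_cast this
    rw [Metric.tendsto_atTop]
    intro ε hε
    have hk0 : ∃ k0, m - ε/2 < g k0 := by
      by_contra h
      push_neg at h
      have : (⨆ k, ((g k : EReal))) ≤ ((m - ε/2 : ℝ) : EReal) :=
        iSup_le fun k => EReal.coe_le_coe_iff.2 (h k)
      rw [hM, EReal.coe_le_coe_iff] at this
      linarith
    obtain ⟨k0, hk0⟩ := hk0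
    have hN1 := Metric.tendsto_atTop.1 log_div_tendsto (ε/2) (by linarith)
    obtain ⟨N1, hN1⟩ := hN1
    refine ⟨max (k0+1) (max N1 1), fun n hn => ?_⟩
    have hnk0 : k0 < n := lt_of_lt_of_le (Nat.lt_succ_self k0) (le_trans (le_max_left _ _) hn)
    have hn1 : 0 < n := le_trans (le_trans (le_max_right _ _) (le_max_right _ _)) hn
    have hnN1 : N1 ≤ n := le_trans (le_trans (le_max_left _ _) (le_max_right _ _)) hn
    have hlow := sum_lower g n k0 hnk0
    have hup := sum_upper g m hgm n hn1
    have hsmall := hN1 n hnN1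
    rw [Real.dist_eq] at hsmall ⊢
    simp only [sub_zero] at hsmall
    rw [abs_lt] at hsmall ⊢
    constructor <;> nlinarith [hsmall.1, hsmall.2, hk0, hlow, hup]

end S18

namespace S18

lemma ereal_cases (x : EReal) : x = ⊥ ∨ (∃ v : ℝ, x = (v : EReal)) ∨ x = ⊤ := by
  induction x using EReal.rec with
  | bot => exact Or.inl rfl
  | coe v => exact Or.inr (Or.inl ⟨v, rfl⟩)
  | top => exact Or.inr (Or.inr rfl)

variable (L : ℝ → EReal)

lemma lstar_eq (z : ℝ) :
    LegendreEE L (z : EReal) = ⨆ s : ℝ, (((s * z : ℝ) : EReal) - L s) := by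
  unfold LegendreEE
  exact iSup_congr fun s => by rw [EReal.coe_mul]

lemma fy (z s : ℝ) : ((s * z : ℝ) : EReal) - L s ≤ LegendreEE L (z : EReal) := by
  rw [lstar_eq]
  exact le_iSup (fun s : ℝ => ((s * z : ℝ) : EReal) - L s) s

lemma exists_finite_val (hbot : ∀ t : ℝ, L t ≠ ⊥) (hfin : ∃ t : ℝ, L t ≠ ⊤) :
    ∃ t0 r0 : ℝ, L t0 = (r0 : EReal) := by
  obtain ⟨t0, ht0⟩ := hfin
  rcases ereal_cases (L t0) with h | ⟨v, hv⟩ | h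
  · exact absurd h (hbot t0)
  · exact ⟨t0, v, hv⟩
  · exact absurd h ht0

lemma lstar_ne_bot (hbot : ∀ t : ℝ, L t ≠ ⊥) (hfin : ∃ t : ℝ, L t ≠ ⊤) (z : ℝ) :
    LegendreEE L (z : EReal) ≠ ⊥ := by
  obtain ⟨t0, r0, h0⟩ := exists_finite_val L hbot hfin
  have h := fy L z t0
  rw [h0, ← EReal.coe_sub] at h
  intro hB
  rw [hB, le_bot_iff] at h
  exact EReal.coe_ne_bot _ h

/-- The epigraph of `L` as a subset of `ℝ × ℝ`. -/
def Epi : Set (ℝ × ℝ) := {p | L p.1 ≤ (p.2 : EReal)}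

lemma epi_closed (hlsc : LowerSemicontinuous L) : IsClosed (Epi L) := by
  have h : IsClosed {p : ℝ × EReal | L p.1 ≤ p.2} :=
    lowerSemicontinuous_iff_isClosed_epigraph.1 hlsc
  have he : Epi L = (fun p : ℝ × ℝ => ((p.1 : ℝ), (p.2 : EReal))) ⁻¹'
      {p : ℝ × EReal | L p.1 ≤ p.2} := rfl
  rw [he]
  exact h.preimage (continuous_fst.prodMk (continuous_coe_real_ereal.comp continuous_snd))

lemma epi_convex
    (hconv : ∀ p q a b : ℝ, 0 ≤ a → 0 ≤ b → a + b = 1 →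
      L (a * p + b * q) ≤ (a : EReal) * L p + (b : EReal) * L q) :
    Convex ℝ (Epi L) := by
  intro p hp q hq a b ha hb hab
  simp only [Epi, Set.mem_setOf_eq] at hp hq ⊢
  have h1 := hconv p.1 q.1 a b ha hb hab
  have h2 : (a : EReal) * L p.1 + (b : EReal) * L q.1
      ≤ (a : EReal) * (p.2 : EReal) + (b : EReal) * (q.2 : EReal) := by
    have hA : (a : EReal) * L p.1 ≤ (a : EReal) * (p.2 : EReal) :=
      mul_le_mul_of_nonneg_left hp (by exact_mod_cast ha)
    have hB : (b : EReal) * L q.1 ≤ (b : EReal) * (q.2 : EReal) :=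
      mul_le_mul_of_nonneg_left hq (by exact_mod_cast hb)
    exact add_le_add hA hB
  have h3 : (a • p + b • q).1 = a * p.1 + b * q.1 := rfl
  have h4 : ((a • p + b • q).2 : EReal) = (a : EReal) * (p.2 : EReal) + (b : EReal) * (q.2 : EReal) := by
    have : (a • p + b • q).2 = a * p.2 + b * q.2 := rfl
    rw [this]
    push_cast
    rfl
  rw [h3, h4]
  exact le_trans h1 h2


lemma separate (hlsc : LowerSemicontinuous L)
    (hconv : ∀ p q a b : ℝ, 0 ≤ a → 0 ≤ b → a + b = 1 →
      L (a * p + b * q) ≤ (a : EReal) * L p + (b : EReal) * L q)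
    (x0 y0 : ℝ) (hx : ¬ L x0 ≤ (y0 : EReal)) :
    ∃ α β u : ℝ, (∀ s y : ℝ, L s ≤ (y : EReal) → α * s + β * y < u) ∧ u < α * x0 + β * y0 := by
  have hx' : (x0, y0) ∉ Epi L := hx
  obtain ⟨f, u, hfu, hux⟩ :=
    geometric_hahn_banach_closed_point (epi_convex L hconv) (epi_closed L hlsc) hx'
  refine ⟨f (1, 0), f (0, 1), u, ?_, ?_⟩
  · intro s y hy
    have h := hfu (s, y) hy
    have hd : f (s, y) = f (1, 0) * s + f (0, 1) * y := by
      have hp : ((s, y) : ℝ × ℝ) = s • ((1 : ℝ), (0 : ℝ)) + y • ((0 : ℝ), (1 : ℝ)) := by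
        simp [Prod.ext_iff]
      rw [hp, map_add, _root_.map_smul, _root_.map_smul, smul_eq_mul, smul_eq_mul]
      ring
    rw [hd] at h
    linarith
  · have hd : f (x0, y0) = f (1, 0) * x0 + f (0, 1) * y0 := by
      have hp : ((x0, y0) : ℝ × ℝ) = x0 • ((1 : ℝ), (0 : ℝ)) + y0 • ((0 : ℝ), (1 : ℝ)) := by
        simp [Prod.ext_iff]
      rw [hp, map_add, _root_.map_smul, _root_.map_smul, smul_eq_mul, smul_eq_mul]
      ring
    rw [hd] at hux
    linarith

lemma beta_nonpos (α β u t0 r0 : ℝ)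
    (h : ∀ s y : ℝ, L s ≤ (y : EReal) → α * s + β * y < u) (h0 : L t0 = (r0 : EReal)) :
    β ≤ 0 := by
  by_contra hβ
  push_neg at hβ
  obtain ⟨n, hn⟩ := exists_nat_gt ((u - α * t0 - β * r0) / β)
  have hle : L t0 ≤ ((r0 + n : ℝ) : EReal) := by
    rw [h0]
    exact_mod_cast (by linarith [Nat.cast_nonneg (α := ℝ) n] : r0 ≤ r0 + (n : ℝ))
  have := h t0 (r0 + n) hle
  rw [div_lt_iff₀ hβ] at hn
  nlinarith

lemma arith1 (α β u s v : ℝ) (hβ : β < 0) (h : α * s + β * v < u) :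
    s * (α / (-β)) - v ≤ u / (-β) := by
  have hb : (0 : ℝ) < -β := by linarith
  have hβ0 : β ≠ 0 := ne_of_lt hβ
  have he : s * (α / (-β)) - v = (α * s + β * v) / (-β) := by
    field_simp
    ring
  rw [he]
  exact le_of_lt ((div_lt_div_iff_of_pos_right hb).2 h)

lemma slope_bound (α β u : ℝ) (hβ : β < 0) (hbot : ∀ t : ℝ, L t ≠ ⊥)
    (h : ∀ s y : ℝ, L s ≤ (y : EReal) → α * s + β * y < u) :
    LegendreEE L ((α / (-β) : ℝ) : EReal) ≤ ((u / (-β) : ℝ) : EReal) := by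
  rw [lstar_eq]
  apply iSup_le
  intro s
  rcases ereal_cases (L s) with hb | ⟨v, hv⟩ | ht
  · exact absurd hb (hbot s)
  · rw [hv, ← EReal.coe_sub, EReal.coe_le_coe_iff]
    exact arith1 α β u s v hβ (h s v (le_of_eq hv))
  · rw [ht, EReal.sub_top]
    exact bot_le


lemma exists_good_z (hbot : ∀ t : ℝ, L t ≠ ⊥) (hfin : ∃ t : ℝ, L t ≠ ⊤)
    (hconv : ∀ p q a b : ℝ, 0 ≤ a → 0 ≤ b → a + b = 1 →
      L (a * p + b * q) ≤ (a : EReal) * L p + (b : EReal) * L q)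
    (hlsc : LowerSemicontinuous L) (t c : ℝ) (hc : ((c : ℝ) : EReal) < L t) :
    ∃ z r : ℝ, LegendreEE L (z : EReal) ≤ (r : EReal) ∧ c < t * z - r := by
  obtain ⟨t0, r0, h0⟩ := exists_finite_val L hbot hfin
  obtain ⟨α, β, u, h1, h2⟩ := separate L hlsc hconv t c (not_le_of_gt hc)
  have hβ : β ≤ 0 := beta_nonpos L α β u t0 r0 h1 h0
  rcases lt_or_eq_of_le hβ with hβneg | hβ0
  · -- β < 0
    refine ⟨α / (-β), u / (-β), slope_bound L α β u hβneg hbot h1, ?_⟩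
    have hb : (0 : ℝ) < -β := by linarith
    have hβ0 : β ≠ 0 := ne_of_lt hβneg
    have he : t * (α / (-β)) - u / (-β) = (α * t + β * c - u) / (-β) + c := by
      field_simp
      ring
    rw [he]
    have : (0:ℝ) < (α * t + β * c - u) / (-β) := div_pos (by linarith) hb
    linarith
  · -- β = 0
    subst hβ0
    simp only [zero_mul, add_zero, mul_zero] at h1 h2
    -- second separation at (t0, r0 - 1)
    have hx2 : ¬ L t0 ≤ ((r0 - 1 : ℝ) : EReal) := by
      rw [h0]
      intro hcontra
      rw [EReal.coe_le_coe_iff] at hcontra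
      linarith
    obtain ⟨α2, β2, u2, h3, h4⟩ := separate L hlsc hconv t0 (r0 - 1) hx2
    have h5 : α2 * t0 + β2 * r0 < u2 := h3 t0 r0 (le_of_eq h0)
    have hβ2 : β2 < 0 := by nlinarith
    set z0 := α2 / (-β2) with hz0
    set r0' := u2 / (-β2) with hr0'
    have hslope : LegendreEE L ((z0 : ℝ) : EReal) ≤ ((r0' : ℝ) : EReal) :=
      slope_bound L α2 β2 u2 hβ2 hbot h3
    have hD : (0 : ℝ) < α * t - u := by linarith
    set lam := max 0 ((c - (t * z0 - r0') + 1) / (α * t - u)) with hlam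
    have hlam0 : (0 : ℝ) ≤ lam := le_max_left _ _
    refine ⟨z0 + lam * α, r0' + lam * u, ?_, ?_⟩
    · rw [lstar_eq]
      apply iSup_le
      intro s
      rcases ereal_cases (L s) with hb | ⟨v, hv⟩ | ht
      · exact absurd hb (hbot s)
      · rw [hv, ← EReal.coe_sub, EReal.coe_le_coe_iff]
        have ha1 : s * z0 - v ≤ r0' := arith1 α2 β2 u2 s v hβ2 (h3 s v (le_of_eq hv))
        have ha2 : α * s < u := h1 s v (le_of_eq hv)
        nlinarith [mul_le_mul_of_nonneg_left (le_of_lt ha2) hlam0]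
      · rw [ht, EReal.sub_top]
        exact bot_le
    · have hge : (c - (t * z0 - r0') + 1) / (α * t - u) ≤ lam := le_max_right _ _
      rw [div_le_iff₀ hD] at hge
      nlinarith


lemma lstar_combo (hbot : ∀ t : ℝ, L t ≠ ⊥) (z w rz rw : ℝ)
    (hz : LegendreEE L (z : EReal) ≤ (rz : EReal))
    (hw : LegendreEE L (w : EReal) ≤ (rw : EReal))
    (a b : ℝ) (ha : 0 ≤ a) (hb : 0 ≤ b) (hab : a + b = 1) :
    LegendreEE L ((a * z + b * w : ℝ) : EReal) ≤ ((a * rz + b * rw : ℝ) : EReal) := by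
  rw [lstar_eq]
  apply iSup_le
  intro s
  rcases ereal_cases (L s) with hB | ⟨v, hv⟩ | hT
  · exact absurd hB (hbot s)
  · have h1 : ((s * z : ℝ) : EReal) - L s ≤ (rz : EReal) := le_trans (fy L z s) hz
    have h2 : ((s * w : ℝ) : EReal) - L s ≤ (rw : EReal) := le_trans (fy L w s) hw
    rw [hv, ← EReal.coe_sub, EReal.coe_le_coe_iff] at h1 h2
    rw [hv, ← EReal.coe_sub, EReal.coe_le_coe_iff]
    have key : s * (a * z + b * w) - v = a * (s * z - v) + b * (s * w - v) := by
      have hb1 : b = 1 - a := by linarith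
      rw [hb1]
      ring
    rw [key]
    have k1 := mul_le_mul_of_nonneg_left h1 ha
    have k2 := mul_le_mul_of_nonneg_left h2 hb
    linarith
  · rw [hT, EReal.sub_top]
    exact bot_le

/-- Fenchel–Young direction: `t·z − L*(z) ≤ L(t)` when `L*(z)` has real value `ρ`. -/
lemma fy_dir (hbot : ∀ t : ℝ, L t ≠ ⊥) (t z ρ : ℝ)
    (hρ : LegendreEE L (z : EReal) = (ρ : EReal)) :
    ((t * z - ρ : ℝ) : EReal) ≤ L t := by
  have h := fy L z t
  rw [hρ] at h
  rcases ereal_cases (L t) with hB | ⟨v, hv⟩ | hT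
  · exact absurd hB (hbot t)
  · rw [hv] at h ⊢
    rw [← EReal.coe_sub, EReal.coe_le_coe_iff] at h
    rw [EReal.coe_le_coe_iff]
    linarith
  · rw [hT]
    exact le_top


lemma between_case (hbot : ∀ t : ℝ, L t ≠ ⊥) (hfin : ∃ t : ℝ, L t ≠ ⊤)
    (zk : ℕ → ℝ) (hzk : ∀ k, LegendreEE L ((zk k : ℝ) : EReal) ≠ ⊤)
    (t c z r : ℝ) (k1 : ℕ)
    (hz : LegendreEE L (z : EReal) ≤ (r : EReal)) (hcz : c < t * z - r)
    (hzw : zk k1 ≠ z)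
    (hacc : ∀ ε > 0, ∃ k, ((z < zk k ∧ zk k < zk k1) ∨ (zk k1 < zk k ∧ zk k < z))
      ∧ |zk k - z| < ε) :
    ∃ k, c < t * zk k - (LegendreEE L ((zk k : ℝ) : EReal)).toReal := by
  set w := zk k1 with hw
  have hwne : LegendreEE L (w : EReal) ≠ ⊤ := hzk k1
  have hwnb : LegendreEE L (w : EReal) ≠ ⊥ := lstar_ne_bot L hbot hfin w
  set rw' := (LegendreEE L (w : EReal)).toReal with hrw
  have hwreal : LegendreEE L (w : EReal) = (rw' : EReal) := (EReal.coe_toReal hwne hwnb).symm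
  set d := |w - z| with hd'
  have hd : 0 < d := abs_pos.2 (sub_ne_zero.2 hzw)
  set Δ := (t * w - rw') - (t * z - r) with hΔ
  set δ0 := ((t * z - r) - c) / (1 + |Δ|) with hδ0'
  have hδ0 : 0 < δ0 := div_pos (by linarith) (by positivity)
  obtain ⟨k, hbet, hnear⟩ := hacc (d * δ0) (by positivity)
  set x := zk k with hx
  have hwz : w - z ≠ 0 := sub_ne_zero.2 hzw
  set b := (x - z) / (w - z) with hb'
  set a := 1 - b with ha'
  have hb0 : 0 < b := by
    rcases hbet with ⟨h1, h2⟩ | ⟨h1, h2⟩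
    · exact div_pos (by linarith) (by linarith)
    · have he : (x - z) / (w - z) = (z - x) / (z - w) := by
        rw [div_eq_div_iff (by linarith : w - z ≠ 0) (by intro h; apply hwz; linarith)]
        ring
      rw [hb', he]
      exact div_pos (by linarith) (by linarith)
  have habs : b = |x - z| / d := by
    rcases hbet with ⟨h1, h2⟩ | ⟨h1, h2⟩
    · rw [hb', hd', abs_of_pos (by linarith : (0:ℝ) < x - z),
        abs_of_pos (by linarith : (0:ℝ) < w - z)]
    · rw [hb', hd', abs_of_neg (by linarith : x - z < 0),
        abs_of_neg (by linarith : w - z < 0)]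
      rw [neg_div_neg_eq]
  have hb1 : b < 1 := by
    rw [habs, div_lt_one hd, hd']
    rcases hbet with ⟨h1, h2⟩ | ⟨h1, h2⟩
    · rw [abs_of_pos (by linarith : (0:ℝ) < x - z), abs_of_pos (by linarith : (0:ℝ) < w - z)]
      linarith
    · rw [abs_of_neg (by linarith : x - z < 0), abs_of_neg (by linarith : w - z < 0)]
      linarith
  have hbd : b < δ0 := by
    rw [habs, div_lt_iff₀ hd]
    calc |x - z| < d * δ0 := hnear
      _ = δ0 * d := by ring
  have hbwz : b * (w - z) = x - z := div_mul_cancel₀ _ hwz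
  have hax : a * z + b * w = x := by
    have : a * z + b * w = z + b * (w - z) := by rw [ha']; ring
    rw [this, hbwz]
    ring
  have hcombo := lstar_combo L hbot z w r rw' hz (le_of_eq hwreal) a b
    (by linarith) (le_of_lt hb0) (by rw [ha']; ring)
  rw [hax] at hcombo
  have hxne : LegendreEE L (x : EReal) ≠ ⊤ := hzk k
  have hxnb : LegendreEE L (x : EReal) ≠ ⊥ := lstar_ne_bot L hbot hfin x
  set ρ := (LegendreEE L (x : EReal)).toReal with hρ'
  have hρ : ρ ≤ a * r + b * rw' := by
    rw [← EReal.coe_le_coe_iff, EReal.coe_toReal hxne hxnb]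
    exact hcombo
  refine ⟨k, ?_⟩
  have hx2 : t * x - (a * r + b * rw') = (t * z - r) + b * Δ := by
    rw [← hax, ha', hΔ]
    ring
  have hmul : δ0 * (1 + |Δ|) = (t * z - r) - c := div_mul_cancel₀ _ (by positivity)
  have hkey : b * |Δ| ≤ δ0 * |Δ| := mul_le_mul_of_nonneg_right hbd.le (abs_nonneg _)
  have hstep : δ0 * |Δ| < δ0 * (1 + |Δ|) :=
    mul_lt_mul_of_pos_left (by linarith [abs_nonneg Δ]) hδ0
  have hneg : b * (-|Δ|) ≤ b * Δ := mul_le_mul_of_nonneg_left (neg_abs_le Δ) hb0.le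
  have hfinal : c < t * x - (a * r + b * rw') := by
    rw [hx2]
    nlinarith
  linarith

lemma exists_k (hbot : ∀ t : ℝ, L t ≠ ⊥) (hfin : ∃ t : ℝ, L t ≠ ⊤)
    (hconv : ∀ p q a b : ℝ, 0 ≤ a → 0 ≤ b → a + b = 1 →
      L (a * p + b * q) ≤ (a : EReal) * L p + (b : EReal) * L q)
    (hlsc : LowerSemicontinuous L)
    (zk : ℕ → ℝ) (hzk : ∀ k, LegendreEE L ((zk k : ℝ) : EReal) ≠ ⊤)
    (hdense : {z : ℝ | LegendreEE L ((z : ℝ) : EReal) ≠ ⊤} ⊆ closure (Set.range zk))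
    (t c : ℝ) (hc : ((c : ℝ) : EReal) < L t) :
    ∃ k, c < t * zk k - (LegendreEE L ((zk k : ℝ) : EReal)).toReal := by
  obtain ⟨z, r, hz, hcz⟩ := exists_good_z L hbot hfin hconv hlsc t c hc
  have hzdom : LegendreEE L (z : EReal) ≠ ⊤ := by
    intro h
    rw [h] at hz
    exact absurd hz (by simp)
  have hcl : z ∈ closure (Set.range zk) := hdense hzdom
  by_cases hmem : ∃ k, zk k = z
  · obtain ⟨k, hk⟩ := hmem
    have hne : LegendreEE L ((zk k : ℝ) : EReal) ≠ ⊤ := hzk k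
    have hnb : LegendreEE L ((zk k : ℝ) : EReal) ≠ ⊥ := lstar_ne_bot L hbot hfin _
    have hle : (LegendreEE L ((zk k : ℝ) : EReal)).toReal ≤ r := by
      rw [← EReal.coe_le_coe_iff, EReal.coe_toReal hne hnb, hk]
      exact hz
    rw [hk] at hle
    exact ⟨k, by rw [hk]; linarith⟩
  · push_neg at hmem
    have hacc0 : ∀ ε > 0, ∃ k, zk k ≠ z ∧ |zk k - z| < ε := by
      intro ε hε
      rw [Metric.mem_closure_iff] at hcl
      obtain ⟨y, hy, hdy⟩ := hcl ε hε
      obtain ⟨k, rfl⟩ := hy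
      refine ⟨k, hmem k, ?_⟩
      rw [← Real.dist_eq, dist_comm]
      exact hdy
    by_cases hR : ∀ ε > 0, ∃ k, z < zk k ∧ zk k < z + ε
    · obtain ⟨k1, hk11, hk12⟩ := hR 1 one_pos
      apply between_case L hbot hfin zk hzk t c z r k1 hz hcz (by intro h; linarith [hk11, h ▸ hk11])
      intro ε hε
      have hε' : 0 < min ε (zk k1 - z) := lt_min hε (by linarith)
      obtain ⟨k, h1, h2⟩ := hR (min ε (zk k1 - z)) hε'
      refine ⟨k, Or.inl ⟨h1, ?_⟩, ?_⟩
      · calc zk k < z + min ε (zk k1 - z) := h2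
          _ ≤ z + (zk k1 - z) := by linarith [min_le_right ε (zk k1 - z)]
          _ = zk k1 := by ring
      · rw [abs_of_pos (by linarith : (0:ℝ) < zk k - z)]
        linarith [min_le_left ε (zk k1 - z)]
    · push_neg at hR
      obtain ⟨ε0, hε0, hR⟩ := hR
      have hL : ∀ ε > 0, ∃ k, z - ε < zk k ∧ zk k < z := by
        intro ε hε
        obtain ⟨k, hne, hnear⟩ := hacc0 (min ε ε0) (lt_min hε hε0)
        have hlt : zk k < z := by
          rcases lt_or_gt_of_ne hne with h | h
          · exact h
          · exfalso
            have := hR k h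
            rw [abs_lt] at hnear
            have := min_le_right ε ε0
            linarith
        refine ⟨k, ?_, hlt⟩
        rw [abs_lt] at hnear
        have := min_le_left ε ε0
        linarith
      obtain ⟨k1, hk11, hk12⟩ := hL 1 one_pos
      apply between_case L hbot hfin zk hzk t c z r k1 hz hcz (ne_of_lt hk12)
      intro ε hε
      have hε' : 0 < min ε (z - zk k1) := lt_min hε (by linarith)
      obtain ⟨k, h1, h2⟩ := hL (min ε (z - zk k1)) hε'
      refine ⟨k, Or.inr ⟨?_, h2⟩, ?_⟩
      · calc zk k1 = z - (z - zk k1) := by ring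
          _ ≤ z - min ε (z - zk k1) := by linarith [min_le_right ε (z - zk k1)]
          _ < zk k := h1
      · rw [abs_of_neg (by linarith : zk k - z < 0)]
        linarith [min_le_left ε (z - zk k1)]


lemma sup_eq (hbot : ∀ t : ℝ, L t ≠ ⊥) (hfin : ∃ t : ℝ, L t ≠ ⊤)
    (hconv : ∀ p q a b : ℝ, 0 ≤ a → 0 ≤ b → a + b = 1 →
      L (a * p + b * q) ≤ (a : EReal) * L p + (b : EReal) * L q)
    (hlsc : LowerSemicontinuous L)
    (zk : ℕ → ℝ) (hzk : ∀ k, LegendreEE L ((zk k : ℝ) : EReal) ≠ ⊤)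
    (hdense : {z : ℝ | LegendreEE L ((z : ℝ) : EReal) ≠ ⊤} ⊆ closure (Set.range zk))
    (t : ℝ) :
    (⨆ k : ℕ, (((t * zk k - (LegendreEE L ((zk k : ℝ) : EReal)).toReal : ℝ)) : EReal)) = L t := by
  apply le_antisymm
  · apply iSup_le
    intro k
    exact fy_dir L hbot t (zk k) _ ((EReal.coe_toReal (hzk k) (lstar_ne_bot L hbot hfin _)).symm)
  · by_contra h
    rw [not_le] at h
    obtain ⟨c, hc1, hc2⟩ := EReal.exists_between_coe_real h
    obtain ⟨k, hk⟩ := exists_k L hbot hfin hconv hlsc zk hzk hdense t c hc2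
    have h1 : (((t * zk k - (LegendreEE L ((zk k : ℝ) : EReal)).toReal : ℝ)) : EReal)
        ≤ ⨆ k : ℕ, (((t * zk k - (LegendreEE L ((zk k : ℝ) : EReal)).toReal : ℝ)) : EReal) :=
      le_iSup (fun k : ℕ => (((t * zk k - (LegendreEE L ((zk k : ℝ) : EReal)).toReal : ℝ)) : EReal)) k
    have h2 : ((c : ℝ) : EReal) < _ := EReal.coe_lt_coe_iff.2 hk
    exact lt_irrefl _ (lt_trans hc1 (lt_of_lt_of_le h2 h1))

end S18

theorem statement18 (L : ℝ → EReal)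
    (hbot : ∀ t : ℝ, L t ≠ ⊥) (hfin : ∃ t : ℝ, L t ≠ ⊤)
    (hconv : ∀ p q a b : ℝ, 0 ≤ a → 0 ≤ b → a + b = 1 →
      L (a * p + b * q) ≤ (a : EReal) * L p + (b : EReal) * L q)
    (hlsc : LowerSemicontinuous L)
    (zk : ℕ → ℝ) (hzk : ∀ k, LegendreEE L ((zk k : ℝ) : EReal) ≠ ⊤)
    (hdense : {z : ℝ | LegendreEE L ((z : ℝ) : EReal) ≠ ⊤} ⊆ closure (Set.range zk)) :
    ∀ t : ℝ, Filter.Tendsto (fun n : ℕ =>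
        Real.toEReal ((n : ℝ)⁻¹ * Real.log (∑ k ∈ Finset.range n,
          Real.exp ((n : ℝ) * (t * zk k - (LegendreEE L ((zk k : ℝ) : EReal)).toReal)))))
      Filter.atTop (nhds (L t)) := by
  intro t
  exact S18.tendsto_logsum
    (fun k => t * zk k - (LegendreEE L ((zk k : ℝ) : EReal)).toReal) (L t)
    (S18.sup_eq L hbot hfin hconv hlsc zk hzk hdense t)
end

section
/- Let L : ℝ → (−∞,+∞] be a proper, convex, lower semicontinuous function with L(0) = 0, let L* be its Legendre–Fenchel transform, and let {z_k : k ≥ 1} be a countable dense subset of dom L*. For n ≥ 1 define the probability measure μ_n = ( Σ_{k=1}^n e^{−n·L*(z_k)} δ_{z_k} ) / ( Σ_{k=1}^n e^{−n·L*(z_k)} ) on ℝ. Then for every t ∈ ℝ the limit lim_{n→∞} (1/n)·log ∫_ℝ e^{n·t·z} dμ_n(z) exists in [-∞,+∞] and equals L(t); in other words, the generalized log-moment generating function of the sequence (μ_n, 1/n) exists as a limit at every t and coincides with L. -/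
open Filter MeasureTheory Set Topology

/-- The probability measure `μ_n = (∑_{k<n} e^{-n L*(z_k)} δ_{z_k}) / (∑_{k<n} e^{-n L*(z_k)})`. -/
noncomputable def paperMeasure (L : ℝ → EReal) (zk : ℕ → ℝ) (n : ℕ) : Measure ℝ :=
  (∑ k ∈ Finset.range n,
      ENNReal.ofReal (Real.exp (-(n : ℝ) * (LegendreEE L ((zk k : ℝ) : EReal)).toReal)))⁻¹ •
    ∑ k ∈ Finset.range n,
      ENNReal.ofReal (Real.exp (-(n : ℝ) * (LegendreEE L ((zk k : ℝ) : EReal)).toReal)) •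
        MeasureTheory.Measure.dirac (zk k)

/-!
By Fenchel–Moreau, `L t = ⨆ z, (t z - L* z)`: a point strictly below the closed convex
epigraph of `L` is separated from it by a line, and a vertical separating line is tilted into a
non-vertical one by adding a large multiple of it to some affine minorant. The supremum may be
taken over the `z_k` alone: for `z` in the domain of `L*` and another point `z_0` there, the open
segment between them lies in the domain, so it contains `z_k` arbitrarily close to `z`, and on it
`L*` is bounded by the chord. With `a_k(t) = t z_k - L*(z_k)`, the `n`-th integral equals
`∑_{k<n} exp (n a_k(t)) / ∑_{k<n} exp (n a_k(0))`, and `(1/n) log ∑_{k<n} exp (n a_k)` lies between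
`max_{k<n} a_k` and `max_{k<n} a_k + log n / n`, so it tends to `⨆ k, a_k`. The limit is therefore
`L t - L 0 = L t`.
-/

theorem coe_le_of_forall_eq_coe {e : EReal} (he : e ≠ ⊥) {x : ℝ}
    (h : ∀ r : ℝ, e = r → x ≤ r) : (x : EReal) ≤ e := by
  induction e using EReal.rec with
  | bot => exact absurd rfl he
  | coe r => exact EReal.coe_le_coe_iff.2 (h r rfl)
  | top => exact le_top

theorem exists_affine_separation {s : Set (ℝ × ℝ)} (hs : Convex ℝ s) (hsc : IsClosed s)
    {p : ℝ × ℝ} (hp : p ∉ s) :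
    ∃ a b u : ℝ, a * p.1 + b * p.2 < u ∧ ∀ q ∈ s, u < a * q.1 + b * q.2 := by
  obtain ⟨f, u, hfp, hfs⟩ := geometric_hahn_banach_point_closed hs hsc hp
  have hf (q : ℝ × ℝ) : f q = f (1, 0) * q.1 + f (0, 1) * q.2 := by
    rw [show q = q.1 • ((1 : ℝ), (0 : ℝ)) + q.2 • ((0 : ℝ), (1 : ℝ)) by ext <;> simp,
      map_add, map_smul, map_smul, smul_eq_mul, smul_eq_mul]
    simp [mul_comm]
  exact ⟨_, _, u, hf p ▸ hfp, fun q hq => hf q ▸ hfs q hq⟩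

section Legendre

variable {L : ℝ → EReal}

theorem coe_mul_sub_le_LegendreEE (s z : ℝ) : ((s * z : ℝ) : EReal) - L s ≤ LegendreEE L z :=
  le_iSup_of_le s (by rw [EReal.coe_mul])

theorem LegendreEE_le_coe_iff {z c : ℝ} :
    LegendreEE L z ≤ c ↔ ∀ s : ℝ, ((s * z - c : ℝ) : EReal) ≤ L s := by
  refine iSup_le_iff.trans (forall_congr' fun s => ?_)
  rw [← EReal.coe_mul, EReal.coe_sub,
    EReal.sub_le_iff_le_add (.inr (EReal.coe_ne_top c)) (.inr (EReal.coe_ne_bot c)),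
    EReal.sub_le_iff_le_add (.inl (EReal.coe_ne_bot c)) (.inl (EReal.coe_ne_top c)), add_comm]

theorem LegendreEE_nonneg (hzero : L 0 = 0) (z : ℝ) : 0 ≤ LegendreEE L z := by
  simpa [hzero] using coe_mul_sub_le_LegendreEE (L := L) 0 z

theorem LegendreEE_ne_bot (hzero : L 0 = 0) (z : ℝ) : LegendreEE L z ≠ ⊥ :=
  ne_bot_of_le_ne_bot EReal.zero_ne_bot (LegendreEE_nonneg hzero z)

theorem coe_mul_sub_LegendreEE_le (hzero : L 0 = 0) (t z : ℝ) :
    ((t * z : ℝ) : EReal) - LegendreEE L z ≤ L t := by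
  by_cases hz : LegendreEE L z = ⊤
  · simp [hz]
  rw [← EReal.coe_toReal hz (LegendreEE_ne_bot hzero z), ← EReal.coe_sub]
  exact LegendreEE_le_coe_iff.1 (EReal.coe_toReal hz (LegendreEE_ne_bot hzero z)).ge t

theorem LegendreEE_combo_le {x y cx cy θ : ℝ} (hx : LegendreEE L x ≤ cx)
    (hy : LegendreEE L y ≤ cy) (hθ₀ : 0 ≤ θ) (hθ₁ : θ ≤ 1) :
    LegendreEE L ((1 - θ) * x + θ * y : ℝ) ≤ ((1 - θ) * cx + θ * cy : ℝ) := by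
  rw [LegendreEE_le_coe_iff] at hx hy ⊢
  intro s
  calc (((s * ((1 - θ) * x + θ * y) - ((1 - θ) * cx + θ * cy)) : ℝ) : EReal)
      = (((1 - θ) • (s * x - cx) + θ • (s * y - cy) : ℝ) : EReal) := by
        simp only [smul_eq_mul]; ring_nf
    _ ≤ (max (s * x - cx) (s * y - cy) : ℝ) :=
        EReal.coe_le_coe_iff.2 (Convex.combo_le_max _ _ (by linarith) hθ₀ (by ring))
    _ ≤ L s := by
        rcases max_choice (s * x - cx) (s * y - cy) with h | h <;> rw [h]
        exacts [hx s, hy s]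

theorem convexOn_toReal_LegendreEE (hzero : L 0 = 0) :
    ConvexOn ℝ {z : ℝ | LegendreEE L z ≠ ⊤} (fun z => (LegendreEE L z).toReal) := by
  have hcoe {z : ℝ} (hz : LegendreEE L z ≠ ⊤) : LegendreEE L z = (LegendreEE L z).toReal :=
    (EReal.coe_toReal hz (LegendreEE_ne_bot hzero z)).symm
  have hcombo {x y a b : ℝ} (hx : LegendreEE L x ≠ ⊤) (hy : LegendreEE L y ≠ ⊤) (ha : 0 ≤ a)
      (hb : 0 ≤ b) (hab : a + b = 1) :
      LegendreEE L (a • x + b • y : ℝ) ≤ (a * (LegendreEE L x).toReal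
        + b * (LegendreEE L y).toReal : ℝ) := by
    obtain rfl : a = 1 - b := by linarith
    exact LegendreEE_combo_le (hcoe hx).le (hcoe hy).le hb (by linarith)
  refine ⟨fun x hx y hy a b ha hb hab => ?_, fun x hx y hy a b ha hb hab => ?_⟩
  · exact ne_top_of_le_ne_top (EReal.coe_ne_top _) (hcombo hx hy ha hb hab)
  · have h := hcombo hx hy ha hb hab
    rw [hcoe (ne_top_of_le_ne_top (EReal.coe_ne_top _) h), EReal.coe_le_coe_iff] at h
    exact h

end Legendre

def ERealConvex (L : ℝ → EReal) : Prop :=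
  ∀ p q a b : ℝ, 0 ≤ a → 0 ≤ b → a + b = 1 →
    L (a * p + b * q) ≤ (a : EReal) * L p + (b : EReal) * L q

def realEpigraph (L : ℝ → EReal) : Set (ℝ × ℝ) := {p | L p.1 ≤ p.2}

section FenchelMoreau

variable {L : ℝ → EReal}

theorem convex_realEpigraph (hconv : ERealConvex L) : Convex ℝ (realEpigraph L) := by
  intro p hp q hq a b ha hb hab
  calc L (a * p.1 + b * q.1) ≤ (a : EReal) * L p.1 + (b : EReal) * L q.1 :=
        hconv p.1 q.1 a b ha hb hab
    _ ≤ (a : EReal) * p.2 + (b : EReal) * q.2 := by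
        gcongr <;> first | exact EReal.coe_nonneg.2 ‹_› | assumption
    _ = ((a * p.2 + b * q.2 : ℝ) : EReal) := by norm_cast

theorem isClosed_realEpigraph (hlsc : LowerSemicontinuous L) : IsClosed (realEpigraph L) :=
  hlsc.isClosed_epigraph.preimage (continuous_id.prodMap continuous_coe_real_ereal)

theorem exists_affine_minorant (hbot : ∀ t : ℝ, L t ≠ ⊥) (hfin : ∃ t : ℝ, L t ≠ ⊤)
    (hconv : ERealConvex L) (hlsc : LowerSemicontinuous L) :
    ∃ m q : ℝ, ∀ s, ((m * s + q : ℝ) : EReal) ≤ L s := by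
  obtain ⟨t₀, ht₀⟩ := hfin
  set r₀ := (L t₀).toReal
  have hr₀ : L t₀ = r₀ := (EReal.coe_toReal ht₀ (hbot t₀)).symm
  have hout : (t₀, r₀ - 1) ∉ realEpigraph L := by
    simp only [realEpigraph, mem_ofPred_eq, hr₀, not_le, EReal.coe_lt_coe_iff]
    linarith
  obtain ⟨a, b, u, hu, hsep⟩ := exists_affine_separation (convex_realEpigraph hconv)
    (isClosed_realEpigraph hlsc) hout
  have hb : 0 < b := by
    have := hsep (t₀, r₀) hr₀.le
    dsimp only at hu this
    linarith
  refine ⟨-a / b, u / b, fun s => coe_le_of_forall_eq_coe (hbot s) fun r hr => ?_⟩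
  have := hsep (s, r) hr.le
  rw [show -a / b * s + u / b = (u - a * s) / b by ring, div_le_iff₀ hb]
  dsimp only at this
  linarith

theorem exists_affine_minorant_gt (hbot : ∀ t : ℝ, L t ≠ ⊥) (hfin : ∃ t : ℝ, L t ≠ ⊤)
    (hconv : ERealConvex L) (hlsc : LowerSemicontinuous L)
    {t c : ℝ} (hc : (c : EReal) < L t) :
    ∃ m q : ℝ, (∀ s, ((m * s + q : ℝ) : EReal) ≤ L s) ∧ c < m * t + q := by
  obtain ⟨a, b, u, hu, hsep⟩ := exists_affine_separation (convex_realEpigraph hconv)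
    (isClosed_realEpigraph hlsc) (show (t, c) ∉ realEpigraph L from not_le.2 hc)
  dsimp only at hu
  have hb : 0 ≤ b := by
    obtain ⟨t₀, ht₀⟩ := hfin
    set r₀ := (L t₀).toReal
    have hr₀ : L t₀ = r₀ := (EReal.coe_toReal ht₀ (hbot t₀)).symm
    by_contra! hb
    set K := |a * t₀ + b * r₀ - u| + 1
    have := hsep (t₀, r₀ + K / -b) (hr₀.trans_le (EReal.coe_le_coe_iff.2
      (le_add_of_nonneg_right (div_nonneg (by positivity) (by linarith)))))
    dsimp only at this
    have hK : b * (K / -b) = -K := by field_simp [hb.ne]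
    rw [mul_add, hK] at this
    linarith [le_abs_self (a * t₀ + b * r₀ - u)]
  obtain ⟨m₀, q₀, hmq₀⟩ := exists_affine_minorant hbot hfin hconv hlsc
  -- tilt the minorant `m₀ s + q₀` by a large multiple of the separating functional
  obtain ⟨lam, hlam, hlam_gt⟩ := exists_pos_lt_mul (by linarith : 0 < u - a * t - b * c)
    (c - m₀ * t - q₀)
  have hden : 0 < 1 + lam * b := by positivity
  refine ⟨(m₀ - lam * a) / (1 + lam * b), (q₀ + lam * u) / (1 + lam * b),
    fun s => coe_le_of_forall_eq_coe (hbot s) fun r hr => ?_, ?_⟩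
  · have h₀ := hmq₀ s
    rw [hr, EReal.coe_le_coe_iff] at h₀
    have h₁ := hsep (s, r) hr.le
    dsimp only at h₁
    rw [div_mul_eq_mul_div, ← add_div, div_le_iff₀ hden]
    nlinarith [mul_le_mul_of_nonneg_left h₁.le hlam.le]
  · rw [div_mul_eq_mul_div, ← add_div, lt_div_iff₀ hden]
    nlinarith

theorem iSup_coe_mul_sub_LegendreEE (hbot : ∀ t : ℝ, L t ≠ ⊥) (hfin : ∃ t : ℝ, L t ≠ ⊤)
    (hconv : ERealConvex L) (hlsc : LowerSemicontinuous L)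
    (hzero : L 0 = 0) (t : ℝ) :
    ⨆ z : ℝ, ((t * z : ℝ) : EReal) - LegendreEE L z = L t := by
  refine le_antisymm (iSup_le fun z => coe_mul_sub_LegendreEE_le hzero t z) ?_
  refine EReal.ge_of_forall_gt_iff_ge.1 fun c hc => ?_
  obtain ⟨m, q, hmq, hcq⟩ := exists_affine_minorant_gt hbot hfin hconv hlsc hc
  have hm : LegendreEE L m ≤ (-q : ℝ) :=
    LegendreEE_le_coe_iff.2 fun s => by simpa [mul_comm] using hmq s
  calc (c : EReal) ≤ ((t * m - -q : ℝ) : EReal) := EReal.coe_le_coe_iff.2 (by linarith)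
    _ ≤ ((t * m : ℝ) : EReal) - LegendreEE L m := by
        rw [EReal.coe_sub]; exact EReal.sub_le_sub le_rfl hm
    _ ≤ ⨆ z : ℝ, ((t * z : ℝ) : EReal) - LegendreEE L z :=
        le_iSup (fun z : ℝ => ((t * z : ℝ) : EReal) - LegendreEE L z) m

end FenchelMoreau

section Density

variable {g : ℝ → EReal} {zk : ℕ → ℝ}

theorem exists_lt_mul_sub_toReal_of_subset_closure
    (hg : ConvexOn ℝ {z | g z ≠ ⊤} (fun z => (g z).toReal)) (hzk : ∀ k, g (zk k) ≠ ⊤)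
    (hdense : {z | g z ≠ ⊤} ⊆ closure (range zk)) {t x z : ℝ} (hz : g z ≠ ⊤)
    (hx : x < t * z - (g z).toReal) : ∃ k, x < t * zk k - (g (zk k)).toReal := by
  by_cases hz₀ : z = zk 0
  · exact ⟨0, hz₀ ▸ hx⟩
  set d := zk 0 - z
  have hd : d ≠ 0 := sub_ne_zero.2 (Ne.symm hz₀)
  -- on the segment from `z` to `zk 0`, convexity bounds `t w - g w` from below by an affine `φ`
  set φ : ℝ → ℝ := fun β => t * (z + β * d) - ((1 - β) * (g z).toReal + β * (g (zk 0)).toReal)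
  have hφ : Continuous φ := by fun_prop
  have hsegment {β : ℝ} (hβ : β ∈ Ioo 0 1) :
      g (z + β * d) ≠ ⊤ ∧ φ β ≤ t * (z + β * d) - (g (z + β * d)).toReal := by
    have hw : z + β * d = (1 - β) • z + β • zk 0 := by simp only [d, smul_eq_mul]; ring
    have h₁ := sub_nonneg.2 hβ.2.le
    have hle := hg.2 hz (hzk 0) h₁ hβ.1.le (by ring)
    rw [← hw] at hle
    simp only [smul_eq_mul] at hle
    exact ⟨hw ▸ hg.1 hz (hzk 0) h₁ hβ.1.le (by ring), by simp only [φ]; linarith⟩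
  set V := {β : ℝ | β ∈ Ioo 0 1 ∧ x < φ β}
  have hV : IsOpen V := isOpen_Ioo.inter (isOpen_lt continuous_const hφ)
  obtain ⟨β₀, hβ₀⟩ : V.Nonempty := by
    have h : ∀ᶠ β in 𝓝 (0 : ℝ), β < 1 ∧ x < φ β :=
      (eventually_lt_nhds one_pos).and (hφ.tendsto 0 |>.eventually (lt_mem_nhds (by simpa [φ])))
    obtain ⟨β, hβ, hβ₀⟩ :=
      ((h.filter_mono nhdsWithin_le_nhds).and (self_mem_nhdsWithin (s := Ioi 0))).exists
    exact ⟨β, ⟨hβ₀, hβ.1⟩, hβ.2⟩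
  set U := (fun w => (w - z) / d) ⁻¹' V
  have hU : IsOpen U := hV.preimage (by fun_prop)
  have hβ₀U : z + β₀ * d ∈ U := by simp [U, hd, hβ₀]
  obtain ⟨_, hwU, k, rfl⟩ := mem_closure_iff.1 (hdense (hsegment hβ₀.1).1) U hU hβ₀U
  have hk : z + (zk k - z) / d * d = zk k := by field_simp; ring
  refine ⟨k, hwU.2.trans_le ?_⟩
  simpa only [hk] using (hsegment hwU.1).2

theorem iSup_coe_mul_sub_range_eq (hg_bot : ∀ z, g z ≠ ⊥)
    (hg : ConvexOn ℝ {z | g z ≠ ⊤} (fun z => (g z).toReal)) (hzk : ∀ k, g (zk k) ≠ ⊤)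
    (hdense : {z | g z ≠ ⊤} ⊆ closure (range zk)) (t : ℝ) :
    ⨆ k, ((t * zk k : ℝ) : EReal) - g (zk k) = ⨆ z : ℝ, ((t * z : ℝ) : EReal) - g z := by
  refine le_antisymm (iSup_le fun k => le_iSup (fun z : ℝ => ((t * z : ℝ) : EReal) - g z) (zk k))
    (iSup_le fun z => ?_)
  by_cases hz : g z = ⊤
  · simp [hz]
  refine EReal.ge_of_forall_gt_iff_ge.1 fun x hx => ?_
  rw [← EReal.coe_toReal hz (hg_bot z), ← EReal.coe_sub, EReal.coe_lt_coe_iff] at hx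
  obtain ⟨k, hk⟩ := exists_lt_mul_sub_toReal_of_subset_closure hg hzk hdense hz hx
  refine le_iSup_of_le k ?_
  rw [← EReal.coe_toReal (hzk k) (hg_bot _), ← EReal.coe_sub]
  exact EReal.coe_le_coe_iff.2 hk.le

end Density

noncomputable def legendreExponent (L : ℝ → EReal) (zk : ℕ → ℝ) (t : ℝ) (k : ℕ) : ℝ :=
  t * zk k - (LegendreEE L (zk k)).toReal

theorem iSup_legendreExponent {L : ℝ → EReal} (hbot : ∀ t : ℝ, L t ≠ ⊥)
    (hfin : ∃ t : ℝ, L t ≠ ⊤) (hzero : L 0 = 0) (hconv : ERealConvex L)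
    (hlsc : LowerSemicontinuous L) {zk : ℕ → ℝ} (hzk : ∀ k, LegendreEE L (zk k) ≠ ⊤)
    (hdense : {z : ℝ | LegendreEE L z ≠ ⊤} ⊆ closure (range zk)) (t : ℝ) :
    ⨆ k, (legendreExponent L zk t k : EReal) = L t := by
  rw [← iSup_coe_mul_sub_LegendreEE hbot hfin hconv hlsc hzero t,
    ← iSup_coe_mul_sub_range_eq (LegendreEE_ne_bot hzero) (convexOn_toReal_LegendreEE hzero)
      hzk hdense t]
  exact iSup_congr fun k => by
    rw [legendreExponent, EReal.coe_sub, EReal.coe_toReal (hzk k) (LegendreEE_ne_bot hzero _)]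

section LogSumExp

noncomputable def scaledLogSumExp (a : ℕ → ℝ) (n : ℕ) : ℝ :=
  Real.log (∑ k ∈ Finset.range n, Real.exp (n * a k)) / n

theorem sum_exp_mul_pos (a : ℕ → ℝ) {n : ℕ} (hn : n ≠ 0) :
    0 < ∑ k ∈ Finset.range n, Real.exp (n * a k) :=
  Finset.sum_pos (fun _ _ => Real.exp_pos _) (Finset.nonempty_range_iff.2 hn)

theorem le_scaledLogSumExp (a : ℕ → ℝ) {k n : ℕ} (hk : k < n) : a k ≤ scaledLogSumExp a n := by
  have hn : (0 : ℝ) < n := by exact_mod_cast (Nat.zero_le k).trans_lt hk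
  rw [scaledLogSumExp, le_div_iff₀ hn, mul_comm, ← Real.log_exp (n * a k)]
  exact Real.log_le_log (Real.exp_pos _) (Finset.single_le_sum
    (fun j _ => (Real.exp_pos (n * a j)).le) (Finset.mem_range.2 hk))

theorem scaledLogSumExp_le (a : ℕ → ℝ) {M : ℝ} (hM : ∀ k, a k ≤ M) {n : ℕ} (hn : n ≠ 0) :
    scaledLogSumExp a n ≤ M + Real.log n / n := by
  have hn' : (0 : ℝ) < n := by exact_mod_cast Nat.pos_of_ne_zero hn
  have hsum : ∑ k ∈ Finset.range n, Real.exp (n * a k) ≤ n * Real.exp (n * M) := by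
    simpa using Finset.sum_le_card_nsmul (Finset.range n) _ _
      fun k _ => Real.exp_le_exp.2 (mul_le_mul_of_nonneg_left (hM k) hn'.le)
  calc scaledLogSumExp a n ≤ Real.log (n * Real.exp (n * M)) / n :=
        div_le_div_of_nonneg_right (Real.log_le_log (sum_exp_mul_pos a hn) hsum) hn'.le
    _ = M + Real.log n / n := by
        rw [Real.log_mul hn'.ne' (Real.exp_pos _).ne', Real.log_exp]; field_simp; ring

theorem tendsto_scaledLogSumExp (a : ℕ → ℝ) :
    Tendsto (fun n => (scaledLogSumExp a n : EReal)) atTop (𝓝 (⨆ k, (a k : EReal))) := by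
  refine tendsto_of_le_liminf_of_limsup_le (iSup_le fun k => ?_) ?_
  · exact le_liminf_of_le (by isBoundedDefault) <| (eventually_gt_atTop k).mono
      fun n hn => EReal.coe_le_coe_iff.2 (le_scaledLogSumExp a hn)
  by_cases hS : ⨆ k, (a k : EReal) = ⊤
  · exact hS ▸ le_top
  set M := (⨆ k, (a k : EReal)).toReal
  have hM : ⨆ k, (a k : EReal) = M :=
    (EReal.coe_toReal hS (ne_bot_of_le_ne_bot (EReal.coe_ne_bot (a 0))
      (le_iSup (fun k => (a k : EReal)) 0))).symm
  have hak (k : ℕ) : a k ≤ M := EReal.coe_le_coe_iff.1 (hM ▸ le_iSup (fun k => (a k : EReal)) k)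
  have hlog : Tendsto (fun n : ℕ => M + Real.log n / n) atTop (𝓝 M) := by
    simpa using tendsto_const_nhds.add
      (Real.isLittleO_log_id_atTop.tendsto_div_nhds_zero.comp tendsto_natCast_atTop_atTop)
  rw [hM, ← (EReal.tendsto_coe.2 hlog).limsup_eq]
  exact limsup_le_limsup ((eventually_ne_atTop 0).mono
    fun n hn => EReal.coe_le_coe_iff.2 (scaledLogSumExp_le a hak hn))

end LogSumExp

section PaperMeasure

variable (L : ℝ → EReal) (zk : ℕ → ℝ) {n : ℕ}

theorem lintegral_exp_paperMeasure (hn : n ≠ 0) (t : ℝ) :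
    ∫⁻ z, ENNReal.ofReal (Real.exp (t * z / (n : ℝ)⁻¹)) ∂paperMeasure L zk n =
      ENNReal.ofReal ((∑ k ∈ Finset.range n, Real.exp (n * legendreExponent L zk t k)) /
        ∑ k ∈ Finset.range n, Real.exp (n * legendreExponent L zk 0 k)) := by
  have hexp (s : ℝ) (k : ℕ) : 0 ≤ Real.exp (n * legendreExponent L zk s k) := (Real.exp_pos _).le
  simp only [paperMeasure, lintegral_smul_measure, lintegral_finsetSum_measure, lintegral_dirac,
    smul_eq_mul]
  rw [ENNReal.ofReal_div_of_pos (sum_exp_mul_pos (legendreExponent L zk 0) hn), div_eq_mul_inv,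
    mul_comm, ENNReal.ofReal_sum_of_nonneg fun k _ => hexp t k,
    ENNReal.ofReal_sum_of_nonneg fun k _ => hexp 0 k]
  congr 2
  · funext k
    rw [← ENNReal.ofReal_mul (Real.exp_pos _).le, ← Real.exp_add, legendreExponent, div_inv_eq_mul]
    ring_nf
  · refine Finset.sum_congr rfl fun k _ => ?_
    rw [legendreExponent]
    ring_nf

theorem isProbabilityMeasure_paperMeasure (hn : n ≠ 0) :
    IsProbabilityMeasure (paperMeasure L zk n) := by
  constructor
  simpa [div_self (sum_exp_mul_pos _ hn).ne'] using lintegral_exp_paperMeasure L zk hn 0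

theorem elog_lintegral_exp_paperMeasure (hn : n ≠ 0) (t : ℝ) :
    elog (n : ℝ)⁻¹ (∫⁻ z, ENNReal.ofReal (Real.exp (t * z / (n : ℝ)⁻¹)) ∂paperMeasure L zk n) =
      ((scaledLogSumExp (legendreExponent L zk t) n
        - scaledLogSumExp (legendreExponent L zk 0) n : ℝ) : EReal) := by
  have hpos (s : ℝ) : 0 < ∑ k ∈ Finset.range n, Real.exp (n * legendreExponent L zk s k) :=
    sum_exp_mul_pos (legendreExponent L zk s) hn
  rw [lintegral_exp_paperMeasure L zk hn, elog,
    ENNReal.log_ofReal_of_pos (div_pos (hpos t) (hpos 0)),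
    Real.log_div (hpos t).ne' (hpos 0).ne', ← EReal.coe_mul, scaledLogSumExp, scaledLogSumExp]
  congr 1
  ring

end PaperMeasure

theorem tendsto_coe_sub_of_tendsto_zero {α : Type*} {l : Filter α} {f g : α → ℝ} {x : EReal}
    (hf : Tendsto (fun i => (f i : EReal)) l (𝓝 x)) (hg : Tendsto g l (𝓝 0)) :
    Tendsto (fun i => ((f i - g i : ℝ) : EReal)) l (𝓝 x) := by
  have h := (EReal.continuousAt_add (p := (x, 0)) (.inr EReal.zero_ne_bot)
    (.inr EReal.zero_ne_top)).tendsto.comp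
      (hf.prodMk_nhds (EReal.tendsto_coe.2 (by simpa using hg.neg)))
  simpa [Function.comp_def, sub_eq_add_neg] using h

theorem statement19 (L : ℝ → EReal)
    (hbot : ∀ t : ℝ, L t ≠ ⊥) (hfin : ∃ t : ℝ, L t ≠ ⊤) (hzero : L 0 = 0)
    (hconv : ∀ p q a b : ℝ, 0 ≤ a → 0 ≤ b → a + b = 1 →
      L (a * p + b * q) ≤ (a : EReal) * L p + (b : EReal) * L q)
    (hlsc : LowerSemicontinuous L)
    (zk : ℕ → ℝ) (hzk : ∀ k, LegendreEE L ((zk k : ℝ) : EReal) ≠ ⊤)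
    (hdense : {z : ℝ | LegendreEE L ((z : ℝ) : EReal) ≠ ⊤} ⊆ closure (Set.range zk)) :
    (∀ n : ℕ, 1 ≤ n → IsProbabilityMeasure (paperMeasure L zk n)) ∧
    (∀ t : ℝ, Filter.Tendsto (fun n : ℕ =>
        elog ((n : ℝ))⁻¹
          (∫⁻ z : ℝ, ENNReal.ofReal (Real.exp (t * z / ((n : ℝ))⁻¹)) ∂ (paperMeasure L zk n)))
      Filter.atTop (nhds (L t))) ∧
    (∀ t : ℝ, genLogMGF Filter.atTop (paperMeasure L zk) (fun n : ℕ => ((n : ℝ))⁻¹) t = L t) := by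
  have hsup := iSup_legendreExponent hbot hfin hzero hconv hlsc hzk hdense
  have hlim (t : ℝ) : Tendsto (fun n : ℕ => elog (n : ℝ)⁻¹
      (∫⁻ z, ENNReal.ofReal (Real.exp (t * z / (n : ℝ)⁻¹)) ∂paperMeasure L zk n))
      atTop (𝓝 (L t)) := by
    have ht := tendsto_scaledLogSumExp (legendreExponent L zk t)
    have h₀ := tendsto_scaledLogSumExp (legendreExponent L zk 0)
    rw [hsup] at ht h₀
    rw [hzero, ← EReal.coe_zero, EReal.tendsto_coe] at h₀
    refine (tendsto_coe_sub_of_tendsto_zero ht h₀).congr' ?_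
    filter_upwards [eventually_ne_atTop 0] with n hn
    exact (elog_lintegral_exp_paperMeasure L zk hn t).symm
  exact ⟨fun n hn => isProbabilityMeasure_paperMeasure L zk (by omega), hlim,
    fun t => (hlim t).limsup_eq⟩
end
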